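/- arXiv:1802.10004 — 2 statements merged into one kernel-verified Lean document; each statement's English description precedes it below -/
import Mathlib

section
/- The SONC cone is not closed under affine transformations of variables: the monomial square f(x₁,x₂) = x₁²x₂² is a nonnegative circuit polynomial (in particular f ∈ C_{2,4}), yet the polynomial obtained from f by the affine substitution x₁ ↦ 1 − x₁, x₂ ↦ 1 − x₂, namely ((1 − x₁)(1 − x₂))², does not belong to C_{2,4}. -/
open MvPolynomial Finset
open scoped Classical

noncomputable section

/-- A circuit polynomial in `n` variables. -/
def IsCircuitPoly (n : ℕ) (f : MvPolynomial (Fin n) ℝ) : Prop :=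
  ∃ (r : ℕ) (α : Fin (r + 1) → (Fin n →₀ ℕ)) (β : Fin n →₀ ℕ)
    (cf : Fin (r + 1) → ℝ) (c : ℝ) (lam : Fin (r + 1) → ℝ),
    r ≤ n ∧
    (∀ j, 0 < cf j) ∧
    (∀ j i, Even (α j i)) ∧
    AffineIndependent ℝ (fun j (i : Fin n) => ((α j i : ℕ) : ℝ)) ∧
    (∀ j, 0 < lam j) ∧ (∑ j, lam j) = 1 ∧
    (∀ i, ((β i : ℕ) : ℝ) = ∑ j, lam j * ((α j i : ℕ) : ℝ)) ∧
    f = (∑ j, monomial (α j) (cf j)) + monomial β c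

/-- A nonnegative circuit polynomial. -/
def IsNNCircuit (n : ℕ) (f : MvPolynomial (Fin n) ℝ) : Prop :=
  IsCircuitPoly n f ∧ ∀ x : Fin n → ℝ, 0 ≤ eval x f

/-- A sum of nonnegative circuit polynomials (no degree bound). -/
def IsSONC (n : ℕ) (f : MvPolynomial (Fin n) ℝ) : Prop :=
  ∃ (k : ℕ) (μ : Fin k → ℝ) (p : Fin k → MvPolynomial (Fin n) ℝ),
    (∀ i, 0 ≤ μ i) ∧ (∀ i, IsNNCircuit n (p i)) ∧
    f = ∑ i, C (μ i) * p i

/-- A SONC built from nonnegative circuit polynomials of degree at most `D`. -/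
def IsSONCOfDeg (n D : ℕ) (f : MvPolynomial (Fin n) ℝ) : Prop :=
  ∃ (k : ℕ) (μ : Fin k → ℝ) (p : Fin k → MvPolynomial (Fin n) ℝ),
    (∀ i, 0 ≤ μ i) ∧ (∀ i, IsNNCircuit n (p i) ∧ (p i).totalDegree ≤ D) ∧
    f = ∑ i, C (μ i) * p i

/-- The SONC cone `C_{n,D}`. -/
def InSONCCone (n D : ℕ) (f : MvPolynomial (Fin n) ℝ) : Prop :=
  f.totalDegree ≤ D ∧ IsSONCOfDeg n D f

/-!
On the line through the all-ones point parallel to the `i`-th axis, a circuit polynomial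
`∑ⱼ cⱼ x^{α(j)} + c x^β` restricts to `∑ⱼ cⱼ t^{α(j)ᵢ} + c t^{βᵢ}`. Since the `cⱼ` are positive,
this vanishes identically only if every `α(j)ᵢ` equals `βᵢ` and `∑ⱼ cⱼ + c = 0`. So a circuit
polynomial vanishing on all these lines has all its exponents equal and is zero. Every summand
of a SONC is nonnegative, so it vanishes wherever the SONC does; hence a SONC vanishing on these
lines is zero. But `((1 - x₁)(1 - x₂))²` vanishes on both lines `x₁ = 1` and `x₂ = 1` and is
nonzero.
-/

theorem exponents_eq_of_forall_sum_mul_pow_add_mul_pow_eq_zero {ι : Type*} [Fintype ι]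
    (e : ι → ℕ) (b : ℕ) (cf : ι → ℝ) (c : ℝ) (hcf : ∀ j, 0 < cf j)
    (h : ∀ t : ℝ, ∑ j, cf j * t ^ e j + c * t ^ b = 0) :
    (∀ j, e j = b) ∧ ∑ j, cf j + c = 0 := by
  have hQ : ∑ j, Polynomial.monomial (e j) (cf j) + Polynomial.monomial b c = 0 :=
    Polynomial.funext fun t => by
      simp [Polynomial.eval_finsetSum, Polynomial.eval_monomial, h t]
  have hcoeff (m : ℕ) : ∑ j, (if e j = m then cf j else 0) + (if b = m then c else 0) = 0 := by
    simpa [Polynomial.finsetSum_coeff, Polynomial.coeff_monomial] using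
      congrArg (Polynomial.coeff · m) hQ
  have he (j₀ : ι) : e j₀ = b := by
    by_contra hne
    have hsum := hcoeff (e j₀)
    rw [if_neg (Ne.symm hne), add_zero, sum_eq_zero_iff_of_nonneg] at hsum
    · simpa using (hcf j₀).ne' (by simpa using hsum j₀ (mem_univ _))
    · intro j _
      split_ifs
      exacts [(hcf j).le, le_rfl]
  exact ⟨he, by simpa [he] using hcoeff b⟩

theorem eval_update_one_monomial {σ : Type*} [DecidableEq σ] (s : σ →₀ ℕ) (a : ℝ) (i : σ) (t : ℝ) :
    eval (Function.update (1 : σ → ℝ) i t) (monomial s a) = a * t ^ s i := by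
  rw [eval_monomial, Finsupp.prod_eq_single i (fun k _ hk => by simp [hk]) fun _ => pow_zero t,
    Function.update_self]

theorem sum_monomial_add_monomial_eq_zero_of_eval_update_one {σ ι : Type*} [DecidableEq σ]
    [Nonempty σ] [Fintype ι]
    (α : ι → σ →₀ ℕ) (β : σ →₀ ℕ) (cf : ι → ℝ) (c : ℝ) (hcf : ∀ j, 0 < cf j)
    (h : ∀ i t,
      eval (Function.update (1 : σ → ℝ) i t) (∑ j, monomial (α j) (cf j) + monomial β c) = 0) :
    ∑ j, monomial (α j) (cf j) + monomial β c = 0 := by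
  have hline (i : σ) := exponents_eq_of_forall_sum_mul_pow_add_mul_pow_eq_zero
    (fun j => α j i) (β i) cf c hcf fun t => by
      simpa [eval_update_one_monomial] using h i t
  have hαβ (j : ι) : α j = β := Finsupp.ext fun i => (hline i).1 j
  calc ∑ j, monomial (α j) (cf j) + monomial β c = monomial β (∑ j, cf j + c) := by
        simp [hαβ, ← map_sum]
    _ = 0 := by rw [(hline (Classical.arbitrary σ)).2, map_zero]

theorem IsCircuitPoly.eq_zero_of_eval_update_one_eq_zero {n : ℕ} [NeZero n]
    {p : MvPolynomial (Fin n) ℝ} (hp : IsCircuitPoly n p)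
    (h : ∀ i t, eval (Function.update (1 : Fin n → ℝ) i t) p = 0) : p = 0 := by
  obtain ⟨r, α, β, cf, c, -, -, hcf, -, -, -, -, -, rfl⟩ := hp
  exact sum_monomial_add_monomial_eq_zero_of_eval_update_one α β cf c hcf h

theorem IsSONCOfDeg.isSONC {n D : ℕ} {f : MvPolynomial (Fin n) ℝ} (hf : IsSONCOfDeg n D f) :
    IsSONC n f :=
  let ⟨k, μ, p, hμ, hp, hf⟩ := hf
  ⟨k, μ, p, hμ, fun i => (hp i).1, hf⟩

theorem IsSONC.eq_zero_of_eval_update_one_eq_zero {n : ℕ} [NeZero n]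
    {f : MvPolynomial (Fin n) ℝ} (hf : IsSONC n f)
    (h : ∀ i t, eval (Function.update (1 : Fin n → ℝ) i t) f = 0) : f = 0 := by
  obtain ⟨k, μ, p, hμ, hp, rfl⟩ := hf
  refine sum_eq_zero fun i _ => ?_
  have hterm (x : Fin n → ℝ) (hx : eval x (∑ j, C (μ j) * p j) = 0) : μ i * eval x (p i) = 0 := by
    simp only [map_sum, map_mul, eval_C] at hx
    exact (sum_eq_zero_iff_of_nonneg fun j _ => mul_nonneg (hμ j) ((hp j).2 x)).mp hx i (mem_univ i)
  obtain hμi | hμi := (hμ i).eq_or_lt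
  · simp [← hμi]
  · rw [(hp i).1.eq_zero_of_eval_update_one_eq_zero fun j t =>
      (mul_eq_zero.mp (hterm _ (h j t))).resolve_left hμi.ne', mul_zero]

theorem isNNCircuit_monomial {n : ℕ} (s : Fin n →₀ ℕ) (hs : ∀ i, Even (s i)) {a : ℝ}
    (ha : 0 < a) : IsNNCircuit n (monomial s a) := by
  refine ⟨⟨0, fun _ => s, s, fun _ => a, 0, fun _ => 1, n.zero_le, fun _ => ha, fun _ => hs,
    affineIndependent_of_subsingleton ℝ (ι := Fin 1) _, fun _ => one_pos, by simp, fun i => by simp,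
    by simp⟩, fun x => ?_⟩
  rw [eval_monomial]
  exact mul_nonneg ha.le (prod_nonneg fun i _ => (hs i).pow_nonneg (x i))

theorem IsNNCircuit.inSONCCone {n D : ℕ} {p : MvPolynomial (Fin n) ℝ} (hp : IsNNCircuit n p)
    (hdeg : p.totalDegree ≤ D) : InSONCCone n D p :=
  ⟨hdeg, 1, fun _ => 1, fun _ => p, fun _ => zero_le_one, fun _ => ⟨hp, hdeg⟩, by simp⟩

/-- The SONC cone is not closed under affine transformations of
variables: `f = x₁²x₂²` is a nonnegative circuit polynomial (so `f ∈ C_{2,4}`),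
yet the polynomial obtained from `f` by the substitution `x₁ ↦ 1 − x₁`,
`x₂ ↦ 1 − x₂`, namely `((1 − x₁)(1 − x₂))²`, is not in `C_{2,4}`. -/
theorem sonc_cone_not_closed_under_affine_transformation :
    IsNNCircuit 2 (X 0 ^ 2 * X 1 ^ 2) ∧
    InSONCCone 2 4 (X 0 ^ 2 * X 1 ^ 2 : MvPolynomial (Fin 2) ℝ) ∧
    (bind₁ (fun i : Fin 2 => 1 - X i)) (X 0 ^ 2 * X 1 ^ 2 : MvPolynomial (Fin 2) ℝ)
      = ((1 - X 0) * (1 - X 1)) ^ 2 ∧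
    ¬ InSONCCone 2 4 (((1 - X 0) * (1 - X 1)) ^ 2) := by
  have hmono : (X 0 ^ 2 * X 1 ^ 2 : MvPolynomial (Fin 2) ℝ)
      = monomial (Finsupp.single 0 2 + Finsupp.single 1 2) 1 := by
    rw [X_pow_eq_monomial, X_pow_eq_monomial, monomial_mul, one_mul]
  have hnn : IsNNCircuit 2 (X 0 ^ 2 * X 1 ^ 2) := by
    rw [hmono]
    exact isNNCircuit_monomial _ (fun i => by fin_cases i <;> simp) one_pos
  have hdeg : (X 0 ^ 2 * X 1 ^ 2 : MvPolynomial (Fin 2) ℝ).totalDegree ≤ 4 := by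
    rw [hmono, totalDegree_monomial _ one_ne_zero, Finsupp.sum_add_index' (fun _ => rfl) fun _ _ _ => rfl]
    simp
  refine ⟨hnn, hnn.inSONCCone hdeg, by simp only [map_mul, map_pow, bind₁_X_right]; ring, ?_⟩
  rintro ⟨-, hsonc⟩
  have hzero := hsonc.isSONC.eq_zero_of_eval_update_one_eq_zero fun i t => by
    fin_cases i <;> simp
  simpa using congrArg (eval 0) hzero
end
end

section
/- Let f ∈ ℝ[x₁,…,xₙ] have degree at most n and satisfy f(x) ≥ 0 for all x ∈ H_P. Then f admits a degree n + d SONC certificate: there exist finitely many SONCs s_i and polynomials H_i, where each H_i is a finite product of polynomials from the family {g₁,…,gₙ, −g₁,…,−gₙ} ∪ {x_j − a_j, b_j − x_j : j ∈ [n]} ∪ P ∪ {1}, such that f = Σ_i s_i H_i and deg(s_i H_i) ≤ n + d for every i. -/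
/-!
The Kronecker polynomials `δ_v` interpolate on the hypercube `H`, so `f` agrees on `H` with
`Σ_v f(v) δ_v`. If `f(v) ≥ 0`, the term `f(v) δ_v` is a nonnegative constant times a product of
the linear factors `x_j - a_j`, `b_j - x_j`. If `f(v) < 0`, the hypothesis yields `p ∈ P` with
`p(v) < 0`, and on `H` the term agrees with `(f(v) / p(v)) δ_v p`, whose coefficient is positive.
What remains vanishes on `H`, so by the combinatorial Nullstellensatz it is `Σ_j g_j h_j` with
`deg (g_j h_j) ≤ n + d`. Expanding `h_j` in the shifted variables `x_i - a_i` makes each `g_j h_j`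
a combination of products from the family, with the sign of each coefficient absorbed by `±g_j`.
All SONC multipliers are therefore nonnegative constants.
-/

open MvPolynomial Finset
open scoped Classical

noncomputable section

/-- The quadratic hypercube constraint `g_j(x) = (x_j − a_j)(x_j − b_j)`. -/
def gpoly {n : ℕ} (a b : Fin n → ℝ) (j : Fin n) : MvPolynomial (Fin n) ℝ :=
  (X j - C (a j)) * (X j - C (b j))

/-- The Kronecker delta polynomial `δ_v` of a vertex `v` of the hypercube
`∏_j {a_j, b_j}`. -/
def kron {n : ℕ} (a b : Fin n → ℝ) (v : Fin n → ℝ) : MvPolynomial (Fin n) ℝ :=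
  ∏ j, if v j = a j then C (1 / (b j - a j)) * (C (b j) - X j)
       else C (1 / (b j - a j)) * (X j - C (a j))

/-- The vertex of the hypercube `∏_j {a_j, b_j}` encoded by `ε : Fin n → Bool`. -/
def vtx {n : ℕ} (a b : Fin n → ℝ) (ε : Fin n → Bool) : Fin n → ℝ :=
  fun j => if ε j then b j else a j

/-- The family `{g₁,…,gₙ, −g₁,…,−gₙ} ∪ {x_j − a_j, b_j − x_j : j} ∪ P ∪ {1}` of
polynomials from which the products `H^{(q)}` in a SONC certificate are formed. -/
def certFamilyOne {n : ℕ} (a b : Fin n → ℝ) (P : Finset (MvPolynomial (Fin n) ℝ)) :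
    Set (MvPolynomial (Fin n) ℝ) :=
  {q | (∃ j, q = gpoly a b j ∨ q = - gpoly a b j ∨
        q = X j - C (a j) ∨ q = C (b j) - X j) ∨ q ∈ P ∨ q = 1}

theorem isNNCircuit_one (n : ℕ) : IsNNCircuit n 1 :=
  ⟨⟨0, fun _ => 0, 0, fun _ => 1, 0, fun _ => 1, Nat.zero_le n, fun _ => one_pos,
    fun _ _ => Even.zero, affineIndependent_of_subsingleton (ι := Fin 1) ℝ _, fun _ => one_pos,
    by simp, fun _ => by simp, by simp⟩, fun _ => by simp⟩

theorem isSONC_C {n : ℕ} {c : ℝ} (hc : 0 ≤ c) : IsSONC n (C c) :=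
  ⟨1, fun _ => c, fun _ => 1, fun _ => hc, fun _ => isNNCircuit_one n, by simp⟩

def soncCertCone (n D : ℕ) (F : Set (MvPolynomial (Fin n) ℝ)) :
    AddSubmonoid (MvPolynomial (Fin n) ℝ) :=
  AddSubmonoid.closure
    {t | ∃ s, IsSONC n s ∧ ∃ H ∈ Submonoid.closure F, (s * H).totalDegree ≤ D ∧ s * H = t}

section soncCertCone

variable {n D : ℕ} {F : Set (MvPolynomial (Fin n) ℝ)}

theorem C_mul_mem_soncCertCone {c : ℝ} {H : MvPolynomial (Fin n) ℝ} (hc : 0 ≤ c)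
    (hH : H ∈ Submonoid.closure F) (hdeg : H.totalDegree ≤ D) :
    C c * H ∈ soncCertCone n D F :=
  AddSubmonoid.subset_closure
    ⟨C c, isSONC_C hc, H, hH, (totalDegree_mul _ _).trans (by simpa using hdeg), rfl⟩

theorem exists_certificate_of_mem_soncCertCone {t : MvPolynomial (Fin n) ℝ}
    (ht : t ∈ soncCertCone n D F) :
    ∃ (N : ℕ) (s Hp : Fin N → MvPolynomial (Fin n) ℝ),
      (∀ i, IsSONC n (s i)) ∧
      (∀ i, ∃ L : List (MvPolynomial (Fin n) ℝ), (∀ q ∈ L, q ∈ F) ∧ Hp i = L.prod) ∧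
      (∀ i, (s i * Hp i).totalDegree ≤ D) ∧
      t = ∑ i, s i * Hp i := by
  obtain ⟨l, hl, rfl⟩ := AddSubmonoid.exists_list_of_mem_closure ht
  choose s hs H hH hdeg hsH using fun i : Fin l.length => hl _ (l.getElem_mem i.2)
  refine ⟨l.length, s, H, hs, fun i => ?_, hdeg, ?_⟩
  · obtain ⟨L, hL, hprod⟩ := Submonoid.exists_list_of_mem_closure (hH i)
    exact ⟨L, hL, hprod.symm⟩
  · simp_rw [hsH, Fin.sum_univ_getElem]

end soncCertCone

section Shift

variable {σ τ R : Type*} [CommRing R]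

theorem totalDegree_bind₁_le (φ : σ → MvPolynomial τ R) (hφ : ∀ i, (φ i).totalDegree ≤ 1)
    (p : MvPolynomial σ R) : (bind₁ φ p).totalDegree ≤ p.totalDegree := by
  conv_lhs => rw [p.as_sum, map_sum]
  refine totalDegree_finsetSum_le fun β hβ => ?_
  calc (bind₁ φ (monomial β (coeff β p))).totalDegree
      ≤ ∑ i ∈ β.support, (φ i ^ β i).totalDegree := by
        rw [bind₁_monomial]
        exact (totalDegree_mul _ _).trans
          (by rw [totalDegree_C, zero_add]; exact totalDegree_finsetProd _ _)
    _ ≤ ∑ i ∈ β.support, β i := Finset.sum_le_sum fun i _ =>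
        (totalDegree_pow _ _).trans (mul_le_of_le_one_right (Nat.zero_le _) (hφ i))
    _ ≤ p.totalDegree := le_totalDegree hβ

theorem exists_eq_sum_C_mul_prod_X_sub_C_pow (a : σ → R) (p : MvPolynomial σ R) :
    ∃ (s : Finset (σ →₀ ℕ)) (c : (σ →₀ ℕ) → R),
      (∀ β ∈ s, (β.sum fun _ e => e) ≤ p.totalDegree) ∧
      p = ∑ β ∈ s, C (c β) * ∏ i ∈ β.support, (X i - C (a i)) ^ β i := by
  obtain ⟨q, hqp, hq⟩ : ∃ q : MvPolynomial σ R, q.totalDegree ≤ p.totalDegree ∧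
      bind₁ (fun i => X i - C (a i)) q = p := by
    refine ⟨bind₁ (fun i => X i + C (a i)) p, totalDegree_bind₁_le _ (fun i => ?_) p, ?_⟩
    · rw [X]
      exact (totalDegree_add _ _).trans
        (max_le ((totalDegree_monomial_le _ _).trans (by simp)) (by simp))
    · simp [bind₁_bind₁]
  refine ⟨q.support, fun β => coeff β q, fun β hβ => (le_totalDegree hβ).trans hqp, ?_⟩
  conv_lhs => rw [← hq, q.as_sum, map_sum]
  simp only [bind₁_monomial]

theorem totalDegree_X_sub_C [Nontrivial R] (i : σ) (r : R) :
    (X i - C r : MvPolynomial σ R).totalDegree = 1 := by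
  rw [sub_eq_add_neg, ← map_neg, totalDegree_add_eq_left_of_totalDegree_lt] <;>
    simp [totalDegree_X]

end Shift

section Hypercube

variable {n d : ℕ} {a b : Fin n → ℝ} {P : Finset (MvPolynomial (Fin n) ℝ)}

def hypercube (a b : Fin n → ℝ) : Finset (Fin n → ℝ) :=
  Fintype.piFinset fun j => {a j, b j}

theorem mem_hypercube {x : Fin n → ℝ} : x ∈ hypercube a b ↔ ∀ j, x j = a j ∨ x j = b j := by
  simp [hypercube]

theorem totalDegree_gpoly (j : Fin n) : (gpoly a b j).totalDegree = 2 := by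
  have hne : ∀ r : ℝ, (X j - C r : MvPolynomial (Fin n) ℝ) ≠ 0 := fun r h => by
    simpa [h] using totalDegree_X_sub_C j r
  rw [gpoly, totalDegree_mul_of_isDomain (hne _) (hne _), totalDegree_X_sub_C,
    totalDegree_X_sub_C]

theorem gpoly_mem_certFamilyOne (j : Fin n) : gpoly a b j ∈ certFamilyOne a b P :=
  Or.inl ⟨j, Or.inl rfl⟩

theorem neg_gpoly_mem_certFamilyOne (j : Fin n) : -gpoly a b j ∈ certFamilyOne a b P :=
  Or.inl ⟨j, Or.inr (Or.inl rfl)⟩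

theorem X_sub_C_mem_certFamilyOne (j : Fin n) : X j - C (a j) ∈ certFamilyOne a b P :=
  Or.inl ⟨j, Or.inr (Or.inr (Or.inl rfl))⟩

theorem C_sub_X_mem_certFamilyOne (j : Fin n) : C (b j) - X j ∈ certFamilyOne a b P :=
  Or.inl ⟨j, Or.inr (Or.inr (Or.inr rfl))⟩

/-- Expanding `h` in the shifted variables `xᵢ - aᵢ` writes `gⱼ h` as a combination of products
of members of the family; a negative coefficient is absorbed by `-gⱼ`. -/
theorem gpoly_mul_mem_soncCertCone {D : ℕ} (j : Fin n) {h : MvPolynomial (Fin n) ℝ}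
    (hdeg : (gpoly a b j * h).totalDegree ≤ D) :
    gpoly a b j * h ∈ soncCertCone n D (certFamilyOne a b P) := by
  rcases eq_or_ne h 0 with rfl | hh
  · simp [zero_mem]
  have hg : gpoly a b j ≠ 0 := fun h0 => by simpa [h0] using totalDegree_gpoly (a := a) (b := b) j
  rw [totalDegree_mul_of_isDomain hg hh, totalDegree_gpoly] at hdeg
  obtain ⟨s, c, hs, hsum⟩ := exists_eq_sum_C_mul_prod_X_sub_C_pow a h
  rw [hsum, Finset.mul_sum]
  refine sum_mem fun β hβ => ?_
  set M := ∏ i ∈ β.support, (X i - C (a i)) ^ β i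
  have hM : M ∈ Submonoid.closure (certFamilyOne a b P) :=
    prod_mem fun i _ => pow_mem (Submonoid.subset_closure (X_sub_C_mem_certFamilyOne i)) _
  have hMdeg : (gpoly a b j * M).totalDegree ≤ D := by
    calc (gpoly a b j * M).totalDegree ≤ 2 + ∑ i ∈ β.support, β i := by
          refine (totalDegree_mul _ _).trans ?_
          rw [totalDegree_gpoly]
          refine Nat.add_le_add_left ((totalDegree_finsetProd _ _).trans
            (Finset.sum_le_sum fun i _ => (totalDegree_pow _ _).trans ?_)) 2
          rw [totalDegree_X_sub_C, mul_one]
      _ ≤ D := (Nat.add_le_add_left (hs β hβ) 2).trans hdeg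
  rcases le_or_gt 0 (c β) with hc | hc
  · rw [mul_left_comm]
    exact C_mul_mem_soncCertCone hc
      (mul_mem (Submonoid.subset_closure (gpoly_mem_certFamilyOne j)) hM) hMdeg
  · have hneg : gpoly a b j * (C (c β) * M) = C (-c β) * (-gpoly a b j * M) := by
      rw [map_neg]; ring
    rw [hneg]
    exact C_mul_mem_soncCertCone (by linarith)
      (mul_mem (Submonoid.subset_closure (neg_gpoly_mem_certFamilyOne j)) hM)
      (by rwa [neg_mul, totalDegree_neg])

theorem mem_soncCertCone_of_eval_eq_zero {D : ℕ} (hab : ∀ j, a j ≠ b j)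
    {R : MvPolynomial (Fin n) ℝ} (hdeg : R.totalDegree ≤ D)
    (hR : ∀ x ∈ hypercube a b, eval x R = 0) :
    R ∈ soncCertCone n D (certFamilyOne a b P) := by
  obtain ⟨h, hh, hRh⟩ := combinatorial_nullstellensatz_exists_linearCombination
    (fun j => ({a j, b j} : Finset ℝ)) (fun j => insert_nonempty _ _) R
    (fun x hx => hR x (Fintype.mem_piFinset.2 hx))
  have hg : ∀ j, ∏ r ∈ ({a j, b j} : Finset ℝ), (X j - C r) = gpoly a b j :=
    fun j => prod_pair (hab j)
  simp only [hg] at hh hRh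
  rw [hRh, Finsupp.linearCombination_apply]
  exact sum_mem fun j _ => by
    show h j * gpoly a b j ∈ _
    rw [mul_comm]
    exact gpoly_mul_mem_soncCertCone j ((hh j).trans hdeg)

def kronFactor (a b v : Fin n → ℝ) (j : Fin n) : MvPolynomial (Fin n) ℝ :=
  if v j = a j then C (b j) - X j else X j - C (a j)

theorem kronFactor_mem_certFamilyOne (v : Fin n → ℝ) (j : Fin n) :
    kronFactor a b v j ∈ certFamilyOne a b P := by
  unfold kronFactor
  split_ifs
  exacts [C_sub_X_mem_certFamilyOne j, X_sub_C_mem_certFamilyOne j]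

theorem totalDegree_kronFactor (v : Fin n → ℝ) (j : Fin n) :
    (kronFactor a b v j).totalDegree = 1 := by
  unfold kronFactor
  split_ifs
  · rw [← neg_sub, totalDegree_neg, totalDegree_X_sub_C]
  · exact totalDegree_X_sub_C j (a j)

theorem totalDegree_prod_kronFactor_le (v : Fin n → ℝ) :
    (∏ j, kronFactor a b v j).totalDegree ≤ n := by
  simpa [totalDegree_kronFactor] using totalDegree_finsetProd univ (kronFactor a b v)

theorem kron_eq_C_mul_prod_kronFactor (v : Fin n → ℝ) :
    kron a b v = C (∏ j, 1 / (b j - a j)) * ∏ j, kronFactor a b v j := by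
  rw [kron, map_prod, ← prod_mul_distrib]
  refine prod_congr rfl fun j _ => ?_
  rw [kronFactor, mul_ite]

theorem totalDegree_kron_mul_le (v : Fin n → ℝ) (q : MvPolynomial (Fin n) ℝ) :
    (kron a b v * q).totalDegree ≤ n + q.totalDegree := by
  rw [kron_eq_C_mul_prod_kronFactor, mul_assoc]
  refine (totalDegree_mul _ _).trans ?_
  rw [totalDegree_C, zero_add]
  exact (totalDegree_mul _ _).trans (Nat.add_le_add_right (totalDegree_prod_kronFactor_le v) _)

theorem eval_kron (hab : ∀ j, a j ≠ b j) {v w : Fin n → ℝ} (hv : v ∈ hypercube a b)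
    (hw : w ∈ hypercube a b) : eval w (kron a b v) = if v = w then 1 else 0 := by
  rw [kron, map_prod]
  calc _ = ∏ j, if v j = w j then (1 : ℝ) else 0 := prod_congr rfl fun j _ => ?_
    _ = _ := by simp [prod_boole, funext_iff]
  have hba : b j - a j ≠ 0 := sub_ne_zero.2 (hab j).symm
  rcases mem_hypercube.1 hv j with h | h <;> rcases mem_hypercube.1 hw j with h' | h' <;>
    simp [h, h', hab j, (hab j).symm, hba]

theorem eval_sum_kron_mul (hab : ∀ j, a j ≠ b j) (q : (Fin n → ℝ) → MvPolynomial (Fin n) ℝ)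
    {w : Fin n → ℝ} (hw : w ∈ hypercube a b) :
    eval w (∑ v ∈ hypercube a b, kron a b v * q v) = eval w (q w) := by
  rw [map_sum, sum_eq_single_of_mem w hw fun v hv hvw => by
      rw [eval_mul, eval_kron hab hv hw, if_neg hvw, zero_mul],
    eval_mul, eval_kron hab hw hw, if_pos rfl, one_mul]

theorem kron_mul_C_mul_mem_soncCertCone (hab : ∀ j, a j < b j) (v : Fin n → ℝ) {c : ℝ}
    (hc : 0 ≤ c) {m : MvPolynomial (Fin n) ℝ} (hm : m ∈ insert 1 P) (hmd : m.totalDegree ≤ d) :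
    kron a b v * (C c * m) ∈ soncCertCone n (n + d) (certFamilyOne a b P) := by
  have hκ : 0 ≤ ∏ j, 1 / (b j - a j) :=
    prod_nonneg fun j _ => one_div_nonneg.2 (sub_nonneg.2 (hab j).le)
  have hm' : m ∈ Submonoid.closure (certFamilyOne a b P) := by
    rcases mem_insert.1 hm with rfl | hm
    exacts [one_mem _, Submonoid.subset_closure (Or.inr (Or.inl hm))]
  rw [kron_eq_C_mul_prod_kronFactor, mul_mul_mul_comm, ← map_mul]
  refine C_mul_mem_soncCertCone (mul_nonneg hκ hc)
    (mul_mem (prod_mem fun j _ => Submonoid.subset_closure (kronFactor_mem_certFamilyOne v j)) hm')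
    ((totalDegree_mul _ _).trans (add_le_add (totalDegree_prod_kronFactor_le v) hmd))

end Hypercube

theorem exists_mem_insert_one_eq_mul_eval {n : ℕ} {P : Finset (MvPolynomial (Fin n) ℝ)}
    {f : MvPolynomial (Fin n) ℝ} {x : Fin n → ℝ}
    (h : (∀ q ∈ P, 0 ≤ eval x q) → 0 ≤ eval x f) :
    ∃ m ∈ insert 1 P, ∃ c : ℝ, 0 ≤ c ∧ eval x f = c * eval x m := by
  by_cases hf : 0 ≤ eval x f
  · exact ⟨1, mem_insert_self _ _, eval x f, hf, by simp⟩
  obtain ⟨q, hq, hqx⟩ : ∃ q ∈ P, eval x q < 0 := by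
    by_contra! hP
    exact hf (h hP)
  exact ⟨q, mem_insert_of_mem hq, eval x f / eval x q,
    div_nonneg_of_nonpos (not_le.1 hf).le hqx.le, (div_mul_cancel₀ _ hqx.ne).symm⟩

/-- If `f` has degree at most `n` and `f ≥ 0` on the constrained
hypercube `H_P` (constraints of degree at most `d`), then `f` admits a degree
`n + d` SONC certificate: `f = Σ_i s_i H_i` with each `s_i` a SONC, each `H_i`
a finite product of polynomials from the family, and `deg(s_i H_i) ≤ n + d`. -/
theorem degree_n_plus_d_SONC_certificate
    (n d : ℕ) (a b : Fin n → ℝ) (hab : ∀ j, a j < b j)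
    (P : Finset (MvPolynomial (Fin n) ℝ)) (hP : ∀ p ∈ P, p.totalDegree ≤ d)
    (f : MvPolynomial (Fin n) ℝ) (hdeg : f.totalDegree ≤ n)
    (hnn : ∀ x : Fin n → ℝ, (∀ j, x j = a j ∨ x j = b j) →
      (∀ q ∈ P, 0 ≤ eval x q) → 0 ≤ eval x f) :
    ∃ (N : ℕ) (s Hp : Fin N → MvPolynomial (Fin n) ℝ),
      (∀ i, IsSONC n (s i)) ∧
      (∀ i, ∃ L : List (MvPolynomial (Fin n) ℝ),
        (∀ q ∈ L, q ∈ certFamilyOne a b P) ∧ Hp i = L.prod) ∧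
      (∀ i, (s i * Hp i).totalDegree ≤ n + d) ∧
      f = ∑ i, s i * Hp i := by
  choose! m hm c hc hfm using fun x (hx : x ∈ hypercube a b) =>
    exists_mem_insert_one_eq_mul_eval (hnn x (mem_hypercube.1 hx))
  have hmd : ∀ x ∈ hypercube a b, (m x).totalDegree ≤ d := fun x hx => by
    rcases mem_insert.1 (hm x hx) with h | h
    exacts [by simp [h], hP _ h]
  set Q := ∑ v ∈ hypercube a b, kron a b v * (C (c v) * m v)
  have hQ : Q ∈ soncCertCone n (n + d) (certFamilyOne a b P) := sum_mem fun v hv =>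
    kron_mul_C_mul_mem_soncCertCone hab v (hc v hv) (hm v hv) (hmd v hv)
  have hQd : Q.totalDegree ≤ n + d := totalDegree_finsetSum_le fun v hv =>
    (totalDegree_kron_mul_le v _).trans
      (Nat.add_le_add_left (((totalDegree_mul _ _).trans (by simp)).trans (hmd v hv)) n)
  have hfQ : f - Q ∈ soncCertCone n (n + d) (certFamilyOne a b P) :=
    mem_soncCertCone_of_eval_eq_zero (fun j => (hab j).ne)
      ((totalDegree_sub _ _).trans (max_le (by omega) hQd)) fun x hx => by
        rw [map_sub, eval_sum_kron_mul (fun j => (hab j).ne) _ hx, eval_mul, eval_C, ← hfm x hx,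
          sub_self]
  simpa using exists_certificate_of_mem_soncCertCone (add_mem hQ hfQ)
end
end
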